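/- For a sequence of fractions k_n/n with 1 ≤ k_n ≤ n-1, gcd(k_n, n) = 1, if σ(k_n/n) → L then the slopes of the Wiman product-quotient surfaces S_n of type (n, 2a, 2b) with shift k_n satisfy lim μ(S_n) = 8 - (8/(ab))·L; in particular all such limits lie in the interval [8 - 8/(ab), 8]. -/
import Mathlib


/-- The list of entries `b₁, b₂, …` of the negative-regular (Hirzebruch–Jung)
continued fraction expansion of `n/k`, computed by the recursion
`n₀ = n`, `n₁ = k`, `bⱼ = ⌈nⱼ₋₁/nⱼ⌉`, `nⱼ₊₁ = bⱼ nⱼ - nⱼ₋₁`,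
with fuel bounding the number of steps (the remainders strictly decrease,
so fuel `n` always suffices). -/
def hjList : ℕ → ℕ → ℕ → List ℤ
  | 0, _, _ => []
  | _ + 1, _, 0 => []
  | f + 1, n, k + 1 =>
      ⌈(n : ℚ) / (k + 1)⌉ ::
        hjList f (k + 1) ((⌈(n : ℚ) / (k + 1)⌉ * ((k : ℤ) + 1) - (n : ℤ)).toNat)

/-- `σ(k/n) = (1 + Σⱼ (bⱼ - 1)) / n`, where the `bⱼ` are the entries of the
Hirzebruch–Jung continued fraction of `n/k`. -/
def hjSigma (n k : ℕ) : ℚ :=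
  (1 + ((((hjList n n k).map (fun b => b - 1)).sum : ℤ) : ℚ)) / n

lemma hj_sum_nonneg (f : ℕ) : ∀ n m : ℕ, 1 ≤ n →
    0 ≤ (((hjList f n m).map (fun b => b - 1)).sum : ℤ) := by
  induction f with
  | zero => intro n m _; simp [hjList]
  | succ f ih =>
    intro n m hn
    match m with
    | 0 => simp [hjList]
    | m + 1 =>
      rw [hjList]
      simp only [List.map_cons, List.sum_cons]
      have hb : (1 : ℤ) ≤ ⌈(n : ℚ) / (m + 1)⌉ := by
        have : (0:ℚ) < (n : ℚ) / (m + 1) := by positivity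
        exact Int.ceil_pos.mpr this
      have h2 := ih (m + 1)
        ((⌈(n : ℚ) / (m + 1)⌉ * ((m : ℤ) + 1) - (n : ℤ)).toNat) (Nat.le_add_left 1 m)
      linarith

lemma hj_sum_le (f : ℕ) : ∀ n m : ℕ, m < n →
    1 + (((hjList f n m).map (fun b => b - 1)).sum : ℤ) ≤ n := by
  induction f with
  | zero =>
    intro n m hm; simp [hjList]
    exact_mod_cast Nat.one_le_of_lt (Nat.lt_of_le_of_lt (Nat.zero_le m) hm)
  | succ f ih =>
    intro n m hm
    match m with
    | 0 =>
      simp [hjList]; exact_mod_cast Nat.one_le_of_lt hm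
    | m + 1 =>
      rw [hjList]
      simp only [List.map_cons, List.sum_cons]
      set b : ℤ := ⌈(n : ℚ) / (m + 1)⌉ with hbdef
      have hm1pos : (0:ℚ) < (m:ℚ) + 1 := by positivity
      have hbn : (n : ℤ) ≤ b * (m + 1) := by
        have h1 : (n : ℚ) / (m + 1) ≤ (b : ℚ) := Int.le_ceil _
        have : (n : ℚ) ≤ (b : ℚ) * ((m:ℚ) + 1) := by
          rw [div_le_iff₀ hm1pos] at h1; linarith
        exact_mod_cast this
      have hblt : b * (m + 1) < (n : ℤ) + (m + 1) := by
        have h1 : (b : ℚ) < (n : ℚ) / (m + 1) + 1 := Int.ceil_lt_add_one _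
        have heq : (b:ℚ) * ((m:ℚ)+1) - (n:ℚ) = ((b:ℚ) - (n:ℚ)/((m:ℚ)+1)) * ((m:ℚ)+1) := by
          field_simp
        have h2 : (b:ℚ) * ((m:ℚ)+1) - (n:ℚ) < (m:ℚ)+1 := by
          rw [heq]
          calc ((b:ℚ) - (n:ℚ)/((m:ℚ)+1)) * ((m:ℚ)+1)
              < 1 * ((m:ℚ)+1) := mul_lt_mul_of_pos_right (by linarith) hm1pos
            _ = (m:ℚ)+1 := one_mul _
        have : (b:ℚ) * ((m:ℚ)+1) < (n:ℚ) + ((m:ℚ)+1) := by linarith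
        exact_mod_cast this
      have hb_le : b ≤ (n : ℤ) - (m : ℤ) := by
        rw [hbdef, Int.ceil_le]
        push_cast
        rw [div_le_iff₀ hm1pos]
        have hmn : (m:ℚ) + 2 ≤ (n:ℚ) := by exact_mod_cast hm
        nlinarith
      have hk' : ((b * ((m:ℤ) + 1) - (n : ℤ)).toNat) < m + 1 := by omega
      have h3 := ih (m + 1) ((b * ((m:ℤ) + 1) - (n : ℤ)).toNat) hk'
      push_cast at h3
      linarith

lemma hjSigma_nonneg (n m : ℕ) (hn : 1 ≤ n) : 0 ≤ hjSigma n m := by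
  unfold hjSigma
  have h := hj_sum_nonneg n n m hn
  have : (0:ℚ) ≤ (((hjList n n m).map (fun b => b - 1)).sum : ℤ) := by exact_mod_cast h
  positivity

lemma hjSigma_le_one (n m : ℕ) (hm : m < n) : hjSigma n m ≤ 1 := by
  unfold hjSigma
  have h := hj_sum_le n n m hm
  have hn : (0:ℚ) < n := by
    have : 0 < n := Nat.lt_of_le_of_lt (Nat.zero_le m) hm
    exact_mod_cast this
  rw [div_le_one hn]
  exact_mod_cast h


open Filter

/-- If `σ(k_n/n) → L`, then the slopes of the Wiman product-quotient surfaces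
of type `(n, 2a, 2b)` with shift `k_n` converge to `8 - (8/(ab))·L`, and this
limit lies in `[8 - 8/(ab), 8]`. -/
theorem stmt_19 (a b : ℕ) (ha : 2 ≤ a) (hb : 3 ≤ b) (k : ℕ → ℕ)
    (hk : ∀ n : ℕ, 2 ≤ n → 1 ≤ k n ∧ k n ≤ n - 1 ∧ Nat.gcd (k n) n = 1)
    (L : ℝ)
    (hL : Tendsto (fun n : ℕ => ((hjSigma n (k n) : ℚ) : ℝ)) atTop (nhds L)) :
    Tendsto
      (fun n : ℕ =>
        (8 : ℝ) - 8 *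
          (1 + ((((hjList n n (k n)).map (fun x => x - 1)).sum : ℤ) : ℝ)) /
          (((n : ℝ) * a - 2) * ((n : ℝ) * b - 2) / (n : ℝ) +
            4 * (1 - 1 / (n : ℝ))))
      atTop (nhds (8 - 8 / ((a : ℝ) * b) * L)) ∧
    8 - 8 / ((a : ℝ) * b) ≤ 8 - 8 / ((a : ℝ) * b) * L ∧
    8 - 8 / ((a : ℝ) * b) * L ≤ 8 := by
  have hab : (0:ℝ) < (a:ℝ) * b := by
    have ha' : (0:ℝ) < a := by exact_mod_cast Nat.lt_of_lt_of_le two_pos ha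
    have hb' : (0:ℝ) < b := by exact_mod_cast Nat.lt_of_lt_of_le three_pos hb
    positivity
  have hL0 : 0 ≤ L := by
    refine ge_of_tendsto hL (eventually_atTop.2 ⟨2, fun n hn => ?_⟩)
    have : (0:ℚ) ≤ hjSigma n (k n) := hjSigma_nonneg n (k n) (le_trans one_le_two hn)
    exact_mod_cast this
  have hL1 : L ≤ 1 := by
    refine le_of_tendsto hL (eventually_atTop.2 ⟨2, fun n hn => ?_⟩)
    obtain ⟨h1, h2, -⟩ := hk n hn
    have hkn : k n < n := by omega
    have := hjSigma_le_one n (k n) hkn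
    exact_mod_cast this
  -- main limit
  have hu : Tendsto (fun n : ℕ => 1 / (n:ℝ)) atTop (nhds 0) :=
    tendsto_one_div_atTop_nhds_zero_nat
  have hE : Tendsto
      (fun n : ℕ => ((a:ℝ) - 2 * (1/(n:ℝ))) * ((b:ℝ) - 2 * (1/(n:ℝ)))
        + 4 * (1/(n:ℝ)) * (1 - 1/(n:ℝ))) atTop (nhds ((a:ℝ) * b)) := by
    have hca : Tendsto (fun _ : ℕ => (a:ℝ)) atTop (nhds (a:ℝ)) := tendsto_const_nhds
    have hcb : Tendsto (fun _ : ℕ => (b:ℝ)) atTop (nhds (b:ℝ)) := tendsto_const_nhds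
    have hc1 : Tendsto (fun _ : ℕ => (1:ℝ)) atTop (nhds (1:ℝ)) := tendsto_const_nhds
    have := ((hca.sub (hu.const_mul 2)).mul (hcb.sub (hu.const_mul 2))).add
      ((hu.const_mul 4).mul (hc1.sub hu))
    simpa using this
  have hmain : Tendsto
      (fun n : ℕ => (8:ℝ) - 8 * ((hjSigma n (k n) : ℚ) : ℝ) *
        (((a:ℝ) - 2 * (1/(n:ℝ))) * ((b:ℝ) - 2 * (1/(n:ℝ)))
          + 4 * (1/(n:ℝ)) * (1 - 1/(n:ℝ)))⁻¹)
      atTop (nhds (8 - 8 * L * ((a:ℝ) * b)⁻¹)) :=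
    tendsto_const_nhds.sub ((hL.const_mul 8).mul (hE.inv₀ (ne_of_gt hab)))
  have hpt : (8:ℝ) - 8 * L * ((a:ℝ) * b)⁻¹ = 8 - 8 / ((a:ℝ) * b) * L := by ring
  refine ⟨?_, ?_, ?_⟩
  · rw [← hpt]
    refine hmain.congr' (eventually_atTop.2 ⟨2, fun n hn => ?_⟩)
    have hn0 : (0:ℝ) < (n:ℝ) := by exact_mod_cast Nat.lt_of_lt_of_le two_pos hn
    have hn0' : (n:ℝ) ≠ 0 := ne_of_gt hn0
    have hs : ((hjSigma n (k n) : ℚ) : ℝ) =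
        (1 + ((((hjList n n (k n)).map (fun x => x - 1)).sum : ℤ) : ℝ)) / n := by
      unfold hjSigma
      push_cast
      simp [List.map_map, Function.comp_def]
    -- denominator is positive
    have hna : (2:ℝ) ≤ (n:ℝ) * a - 2 := by
      have h2 : (2:ℝ) ≤ (n:ℝ) := by exact_mod_cast hn
      have h2a : (2:ℝ) ≤ (a:ℝ) := by exact_mod_cast ha
      nlinarith
    have hnb : (2:ℝ) ≤ (n:ℝ) * b - 2 := by
      have h2 : (2:ℝ) ≤ (n:ℝ) := by exact_mod_cast hn
      have h3b : (3:ℝ) ≤ (b:ℝ) := by exact_mod_cast hb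
      nlinarith
    have hD : (0:ℝ) < ((n:ℝ) * a - 2) * ((n:ℝ) * b - 2) / (n:ℝ) + 4 * (1 - 1/(n:ℝ)) := by
      have h1 : (0:ℝ) < ((n:ℝ) * a - 2) * ((n:ℝ) * b - 2) / (n:ℝ) := by positivity
      have h2 : (2:ℝ) ≤ (n:ℝ) := by exact_mod_cast hn
      have h3 : (0:ℝ) ≤ 1 - 1/(n:ℝ) := by
        rw [sub_nonneg, div_le_one hn0]; linarith
      linarith
    have hG : (((a:ℝ) - 2 * (1/(n:ℝ))) * ((b:ℝ) - 2 * (1/(n:ℝ)))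
          + 4 * (1/(n:ℝ)) * (1 - 1/(n:ℝ)))
        = (((n:ℝ) * a - 2) * ((n:ℝ) * b - 2) / (n:ℝ) + 4 * (1 - 1/(n:ℝ))) / n := by
      field_simp
    have hDne : ((n:ℝ) * a - 2) * ((n:ℝ) * b - 2) / (n:ℝ) + 4 * (1 - 1/(n:ℝ)) ≠ 0 :=
      ne_of_gt hD
    dsimp only
    rw [hs, hG, inv_div]
    have h1 : (1 + ((((hjList n n (k n)).map (fun x => x - 1)).sum : ℤ) : ℝ)) / (n:ℝ) *
        ((n:ℝ) / (((n:ℝ) * a - 2) * ((n:ℝ) * b - 2) / (n:ℝ) + 4 * (1 - 1/(n:ℝ))))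
        = (1 + ((((hjList n n (k n)).map (fun x => x - 1)).sum : ℤ) : ℝ)) /
          (((n:ℝ) * a - 2) * ((n:ℝ) * b - 2) / (n:ℝ) + 4 * (1 - 1/(n:ℝ))) := by
      rw [div_mul_div_comm, mul_comm ((n:ℝ)) _]
      rw [mul_div_mul_right _ _ hn0']
    rw [mul_assoc, h1]; ring
  · nlinarith [div_pos (by norm_num : (0:ℝ) < 8) hab]
  · nlinarith [div_pos (by norm_num : (0:ℝ) < 8) hab]
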